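/- Let H be a separable complex Hilbert space, C a conjugation on H, and let T = A + iB where A is a C-symmetric bounded operator (A* = CAC) and B is a C-skew-symmetric bounded operator (CB*C = −B). Then the following are equivalent: (1) T is C-normal; (2) ‖Tx‖² = ‖Ax‖² + ‖Bx‖² for all x ∈ H; (3) A*B = B*A; (4) AB* = BA*. -/

import Mathlib

open scoped InnerProductSpace
open ContinuousLinearMap TopologicalSpace

/-- A conjugation on a complex Hilbert space: an anti-linear, involutive map
satisfying `⟪C x, C y⟫ = ⟪y, x⟫`. -/
def Conjugation {K : Type*} [NormedAddCommGroup K] [InnerProductSpace ℂ K] (C : K → K) : Prop :=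
  (∀ (a : ℂ) (x y : K), C (a • x + y) = (starRingEnd ℂ) a • C x + C y) ∧
  (∀ x, C (C x) = x) ∧
  (∀ x y : K, ⟪C x, C y⟫_ℂ = ⟪y, x⟫_ℂ)

/-- `T` is `C`-normal: `C T*T C = T T*` (pointwise). -/
def CNormal {K : Type*} [NormedAddCommGroup K] [InnerProductSpace ℂ K] [CompleteSpace K]
    (C : K → K) (T : K →L[ℂ] K) : Prop :=
  ∀ x, C (adjoint T (T (C x))) = T (adjoint T x)

/-! The identity `‖u + i v‖² = ‖u‖² + ‖v‖² - 2 Im ⟪u, v⟫` reduces (2) to the reality of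
`⟪A x, B x⟫`, which is (3) because `⟪(A*B - B*A) x, x⟫ = -2i Im ⟪A x, B x⟫` and over `ℂ` an
operator is determined by its quadratic form. Conjugating by `C` turns `A*` into `A` and `B*`
into `-B`, so it carries (3) to (4), and it turns `C T*T C - T T*` into `2i (AB* - BA*)`, which
gives (1) ↔ (4). -/

section InnerProduct

variable {E : Type*} [NormedAddCommGroup E] [InnerProductSpace ℂ E]

theorem norm_add_I_smul_sq (u v : E) :
    ‖u + Complex.I • v‖ ^ 2 = ‖u‖ ^ 2 + ‖v‖ ^ 2 - 2 * (⟪u, v⟫_ℂ).im := by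
  rw [@norm_add_sq ℂ, inner_smul_right, norm_smul, Complex.norm_I, RCLike.re_to_complex,
    Complex.mul_re, Complex.I_re, Complex.I_im]
  ring

variable [CompleteSpace E]

theorem adjoint_mul_eq_adjoint_mul_iff_im_inner (A B : E →L[ℂ] E) :
    adjoint A * B = adjoint B * A ↔ ∀ x, (⟪A x, B x⟫_ℂ).im = 0 := by
  have inner_apply_self : ∀ x, ⟪(adjoint A * B) x, x⟫_ℂ = ⟪(adjoint B * A) x, x⟫_ℂ ↔
      (⟪A x, B x⟫_ℂ).im = 0 := fun x => by
    rw [mul_apply_eq_comp, mul_apply_eq_comp, adjoint_inner_left, adjoint_inner_left,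
      ← inner_conj_symm (B x), Complex.conj_eq_iff_im]
  rw [← ContinuousLinearMap.coe_inj, ← ext_inner_map]
  exact forall_congr' inner_apply_self

theorem forall_norm_add_I_smul_sq_iff (A B : E →L[ℂ] E) :
    (∀ x, ‖(A + Complex.I • B) x‖ ^ 2 = ‖A x‖ ^ 2 + ‖B x‖ ^ 2) ↔
      adjoint A * B = adjoint B * A := by
  simp only [adjoint_mul_eq_adjoint_mul_iff_im_inner, add_apply, smul_apply, norm_add_I_smul_sq]
  refine forall_congr' fun x => ?_
  constructor <;> intro h <;> linarith

end InnerProduct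

namespace Conjugation

variable {K : Type*} [NormedAddCommGroup K] [InnerProductSpace ℂ K] {C : K → K}
  (hC : Conjugation C)
include hC

theorem apply_apply (x : K) : C (C x) = x := hC.2.1 x

theorem bijective : Function.Bijective C :=
  Function.Involutive.bijective hC.apply_apply

theorem map_add (x y : K) : C (x + y) = C x + C y := by
  simpa using hC.1 1 x y

theorem map_zero : C 0 = 0 := by
  simpa using hC.map_add 0 0

theorem map_smul (a : ℂ) (x : K) : C (a • x) = (starRingEnd ℂ) a • C x := by
  simpa [hC.map_zero] using hC.1 a x 0

theorem map_neg (x : K) : C (-x) = -C x := by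
  simpa using hC.map_smul (-1) x

theorem map_sub (x y : K) : C (x - y) = C x - C y := by
  rw [sub_eq_add_neg, hC.map_add, hC.map_neg, sub_eq_add_neg]

variable [CompleteSpace K] {A B : K →L[ℂ] K}

theorem apply_adjoint_of_symm (hA : ∀ x, adjoint A x = C (A (C x))) (x : K) :
    C (adjoint A x) = A (C x) := by
  rw [hA, hC.apply_apply]

theorem apply_adjoint_of_skew (hB : ∀ x, C (adjoint B (C x)) = -(B x)) (x : K) :
    C (adjoint B x) = -B (C x) := by
  simpa only [hC.apply_apply] using hB (C x)

theorem adjoint_apply_of_skew (hB : ∀ x, C (adjoint B (C x)) = -(B x)) (x : K) :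
    adjoint B x = -C (B (C x)) := by
  rw [← hC.map_neg, ← hB, hC.apply_apply, hC.apply_apply]

theorem conj_apply_conj_of_skew (hB : ∀ x, C (adjoint B (C x)) = -(B x)) (x : K) :
    C (B (C x)) = -adjoint B x := by
  rw [hC.adjoint_apply_of_skew hB, neg_neg]

variable (hA : ∀ x, adjoint A x = C (A (C x))) (hB : ∀ x, C (adjoint B (C x)) = -(B x))
include hA hB

theorem adjoint_mul_comm_iff :
    adjoint A * B = adjoint B * A ↔ A * adjoint B = B * adjoint A := by
  have conj_left : ∀ x, (adjoint A * B) (C x) = -C ((A * adjoint B) x) := fun x => by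
    rw [mul_apply_eq_comp, hA, hC.conj_apply_conj_of_skew hB, mul_apply_eq_comp, ← hC.map_neg,
      _root_.map_neg A]
  have conj_right : ∀ x, (adjoint B * A) (C x) = -C ((B * adjoint A) x) := fun x => by
    rw [mul_apply_eq_comp, mul_apply_eq_comp, hC.adjoint_apply_of_skew hB, ← hA]
  rw [ContinuousLinearMap.ext_iff, ContinuousLinearMap.ext_iff, hC.bijective.surjective.forall]
  simp only [conj_left, conj_right, neg_inj, hC.bijective.injective.eq_iff]

theorem conj_add_I_smul_conj (x : K) :
    C ((A + Complex.I • B) (C x)) = adjoint A x + Complex.I • adjoint B x := by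
  rw [add_apply, smul_apply, hC.map_add, hC.map_smul, ← hA, hC.conj_apply_conj_of_skew hB,
    Complex.conj_I, neg_smul, smul_neg, neg_neg]

theorem apply_adjoint_add_I_smul (x : K) :
    C (adjoint (A + Complex.I • B) x) = A (C x) - Complex.I • B (C x) := by
  rw [_root_.map_add adjoint, map_smulₛₗ adjoint, add_apply, smul_apply, Complex.conj_I, neg_smul,
    ← sub_eq_add_neg, hC.map_sub, hC.map_smul, hC.apply_adjoint_of_symm hA,
    hC.apply_adjoint_of_skew hB, Complex.conj_I, neg_smul, smul_neg, neg_neg]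

theorem cNormal_add_I_smul_iff :
    CNormal C (A + Complex.I • B) ↔ A * adjoint B = B * adjoint A := by
  set T := A + Complex.I • B
  have commutator : ∀ x, C (adjoint T (T (C x))) - T (adjoint T x) =
      (2 * Complex.I) • (A (adjoint B x) - B (adjoint A x)) := fun x => by
    have adjoint_T_apply : adjoint T x = adjoint A x - Complex.I • adjoint B x := by
      rw [← hC.apply_apply (adjoint T x), apply_adjoint_add_I_smul hC hA hB, hC.map_sub,
        hC.map_smul, ← hA, hC.conj_apply_conj_of_skew hB, Complex.conj_I]
      module
    rw [apply_adjoint_add_I_smul hC hA hB, conj_add_I_smul_conj hC hA hB, adjoint_T_apply]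
    simp only [T, add_apply, smul_apply, _root_.map_add, _root_.map_sub, _root_.map_smul,
      smul_add, smul_sub, smul_smul, Complex.I_mul_I]
    module
  have two_I_ne_zero : (2 * Complex.I : ℂ) ≠ 0 := by simp
  simp only [CNormal, ContinuousLinearMap.ext_iff, mul_apply_eq_comp, ← sub_eq_zero (a := C _),
    commutator, smul_eq_zero, two_I_ne_zero, false_or, sub_eq_zero]

end Conjugation

theorem stmt_12_general {H : Type*} [NormedAddCommGroup H] [InnerProductSpace ℂ H] [CompleteSpace H]
    (C : H → H) (hC : Conjugation C)
    (A B : H →L[ℂ] H)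
    (hA : ∀ x, adjoint A x = C (A (C x)))
    (hB : ∀ x, C (adjoint B (C x)) = -(B x)) :
    (CNormal C (A + Complex.I • B) ↔
      ∀ x : H, ‖(A + Complex.I • B) x‖ ^ 2 = ‖A x‖ ^ 2 + ‖B x‖ ^ 2) ∧
    ((∀ x : H, ‖(A + Complex.I • B) x‖ ^ 2 = ‖A x‖ ^ 2 + ‖B x‖ ^ 2) ↔
      adjoint A * B = adjoint B * A) ∧
    (adjoint A * B = adjoint B * A ↔ A * adjoint B = B * adjoint A) := by
  have h23 := forall_norm_add_I_smul_sq_iff A B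
  have h34 := hC.adjoint_mul_comm_iff hA hB
  exact ⟨(hC.cNormal_add_I_smul_iff hA hB).trans (h34.symm.trans h23.symm), h23, h34⟩

/-- Cartesian decomposition characterization of `C`-normal operators: for `T = A + iB`
with `A` `C`-symmetric and `B` `C`-skew-symmetric, the following are equivalent:
(1) `T` is `C`-normal; (2) `‖Tx‖² = ‖Ax‖² + ‖Bx‖²` for all `x`; (3) `A*B = B*A`;
(4) `AB* = BA*`. -/
theorem stmt_12 {H : Type*} [NormedAddCommGroup H] [InnerProductSpace ℂ H] [CompleteSpace H]
    [SeparableSpace H]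
    (C : H → H) (hC : Conjugation C)
    (A B : H →L[ℂ] H)
    (hA : ∀ x, adjoint A x = C (A (C x)))
    (hB : ∀ x, C (adjoint B (C x)) = -(B x)) :
    (CNormal C (A + Complex.I • B) ↔
      ∀ x : H, ‖(A + Complex.I • B) x‖ ^ 2 = ‖A x‖ ^ 2 + ‖B x‖ ^ 2) ∧
    ((∀ x : H, ‖(A + Complex.I • B) x‖ ^ 2 = ‖A x‖ ^ 2 + ‖B x‖ ^ 2) ↔
      adjoint A * B = adjoint B * A) ∧
    (adjoint A * B = adjoint B * A ↔ A * adjoint B = B * adjoint A) :=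
  stmt_12_general C hC A B hA hB
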